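/- Let Λ be a lattice in ℝ². Suppose F : ℝ² → ℝ² is continuous, G : ℝ² → ℝ² is a homeomorphism, and π_Λ ∘ F = π_Λ ∘ G (i.e., F(x) lies in the Γ_Λ-orbit of G(x) for every x). Then there exists a single element γ ∈ Γ_Λ such that F = γ ∘ G. In particular, a map inducing a given map on ℝ²/Γ_Λ is unique up to postcomposition with an element of Γ_Λ. -/

import Mathlib

/-- The plane ℝ². -/
abbrev V2 : Type := EuclideanSpace ℝ (Fin 2)

/-- `Λ` is a lattice in ℝ²: a discrete additive subgroup spanning ℝ². -/
def IsLattice (Λ : AddSubgroup V2) : Prop :=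
  DiscreteTopology Λ ∧ Submodule.span ℝ (Λ : Set V2) = ⊤

/-- The group `Γ_Λ` of maps `x ↦ 2λ + x` or `x ↦ 2λ − x` with `λ ∈ Λ`, as a set of
self-maps of ℝ². -/
def GammaSet (Λ : AddSubgroup V2) : Set (V2 → V2) :=
  {g : V2 → V2 | ∃ l ∈ Λ,
    g = (fun x => (2:ℝ) • l + x) ∨ g = fun x => (2:ℝ) • l - x}

/-- The `Γ_Λ`-orbit of `x`: the set `{2λ + x : λ ∈ Λ} ∪ {2λ − x : λ ∈ Λ}`. -/
def orbitG (Λ : AddSubgroup V2) (x : V2) : Set V2 :=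
  {y : V2 | ∃ l ∈ Λ, y = (2:ℝ) • l + x ∨ y = (2:ℝ) • l - x}

/-!
Put `H = F ∘ G⁻¹`, so that `H y = 2λ ± y` with `λ ∈ Λ` depending on `y`. The sets `A` where
`(H y - y) / 2 ∈ Λ` and `B` where `(H y + y) / 2 ∈ Λ` are closed (a discrete subgroup is closed)
and cover the plane, and `A ∩ B ⊆ Λ`. The complement of the countable set `Λ` is connected and
dense, so it lies in `A` or in `B`, hence `A` or `B` is the whole plane. Then `y ↦ (H y ∓ y) / 2`
is a continuous map into the discrete `Λ`, hence constant. Connectedness of `Λᶜ` is where the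
dimension enters: on the line, `y ↦ |y|` is a counterexample.
-/

theorem eq_univ_or_eq_univ_of_isClosed_of_inter_subset {X : Type*} [TopologicalSpace X]
    {A B S : Set X} (hA : IsClosed A) (hB : IsClosed B) (hAB : A ∪ B = Set.univ)
    (hABS : A ∩ B ⊆ S) (hconn : IsPreconnected Sᶜ) (hdense : Dense Sᶜ) :
    A = Set.univ ∨ B = Set.univ := by
  have hsplit : Sᶜ ∩ (A ∩ B) = ∅ :=
    Set.eq_empty_of_forall_notMem fun y ⟨hyS, hyAB⟩ => hyS (hABS hyAB)
  rcases isPreconnected_iff_subset_of_disjoint_closed.1 hconn A B hA hB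
    (hAB ▸ Set.subset_univ _) hsplit with h | h
  · exact .inl (hA.closure_eq ▸ (hdense.mono h).closure_eq)
  · exact .inr (hB.closure_eq ▸ (hdense.mono h).closure_eq)

section Reflections

variable {E : Type*} [AddCommGroup E] [Module ℝ E]

theorem eq_two_smul_add_iff {v w l : E} : v = (2:ℝ) • l + w ↔ (2:ℝ)⁻¹ • (v - w) = l := by
  rw [inv_smul_eq_iff₀ two_ne_zero, sub_eq_iff_eq_add]

theorem eq_two_smul_sub_iff {v w l : E} : v = (2:ℝ) • l - w ↔ (2:ℝ)⁻¹ • (v + w) = l := by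
  rw [inv_smul_eq_iff₀ two_ne_zero, eq_sub_iff_add_eq]

theorem inv_two_smul_add_sub_inv_two_smul_sub (v w : E) :
    (2:ℝ)⁻¹ • (v + w) - (2:ℝ)⁻¹ • (v - w) = w := by
  rw [← smul_sub, add_sub_sub_cancel, ← two_smul ℝ, inv_smul_smul₀ two_ne_zero]

end Reflections

theorem exists_forall_eq_two_smul_add_or_sub {E : Type*} [NormedAddCommGroup E]
    [NormedSpace ℝ E] [SecondCountableTopology E] (hE : 1 < Module.rank ℝ E)
    (Λ : AddSubgroup E) [DiscreteTopology Λ] {H : E → E} (hH : Continuous H)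
    (hHΛ : ∀ y, ∃ l ∈ Λ, H y = (2:ℝ) • l + y ∨ H y = (2:ℝ) • l - y) :
    ∃ l ∈ Λ, H = (fun y => (2:ℝ) • l + y) ∨ H = (fun y => (2:ℝ) • l - y) := by
  set a : E → E := fun y => (2:ℝ)⁻¹ • (H y - y)
  set b : E → E := fun y => (2:ℝ)⁻¹ • (H y + y)
  have ha : Continuous a := (hH.sub continuous_id).const_smul _
  have hb : Continuous b := (hH.add continuous_id).const_smul _
  have hΛclosed : IsClosed (Λ : Set E) := AddSubgroup.isClosed_of_discrete
  have hcover : a ⁻¹' Λ ∪ b ⁻¹' Λ = Set.univ := Set.eq_univ_of_forall fun y => by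
    obtain ⟨l, hl, h | h⟩ := hHΛ y
    · exact .inl (show (2:ℝ)⁻¹ • (H y - y) ∈ Λ from eq_two_smul_add_iff.1 h ▸ hl)
    · exact .inr (show (2:ℝ)⁻¹ • (H y + y) ∈ Λ from eq_two_smul_sub_iff.1 h ▸ hl)
  have hinter : a ⁻¹' Λ ∩ b ⁻¹' Λ ⊆ Λ := fun y ⟨hay, hby⟩ =>
    inv_two_smul_add_sub_inv_two_smul_sub (H y) y ▸ sub_mem hby hay
  have : Nontrivial E := rank_pos_iff_nontrivial.1 (zero_lt_one.trans hE)
  have hcount : (Λ : Set E).Countable :=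
    Set.countable_coe_iff.1 (TopologicalSpace.separableSpace_iff_countable.1 inferInstance)
  have hconst : ∀ f : E → E, Continuous f → (∀ y, f y ∈ Λ) → ∀ y, f y = f 0 := fun f hf hfΛ y =>
    isPreconnected_univ.constant_of_mapsTo (isDiscrete_iff_discreteTopology.2 ‹_›)
      hf.continuousOn (fun z _ => hfΛ z) (Set.mem_univ y) (Set.mem_univ 0)
  rcases eq_univ_or_eq_univ_of_isClosed_of_inter_subset (hΛclosed.preimage ha)
    (hΛclosed.preimage hb) hcover hinter
    (hcount.isConnected_compl_of_one_lt_rank hE).isPreconnected (hcount.dense_compl ℝ)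
    with hA | hB
  · have haΛ : ∀ y, a y ∈ Λ := Set.eq_univ_iff_forall.1 hA
    refine ⟨a 0, haΛ 0, .inl (funext fun y => eq_two_smul_add_iff.2 ?_)⟩
    exact hconst a ha haΛ y
  · have hbΛ : ∀ y, b y ∈ Λ := Set.eq_univ_iff_forall.1 hB
    refine ⟨b 0, hbΛ 0, .inr (funext fun y => eq_two_smul_sub_iff.2 ?_)⟩
    exact hconst b hb hbΛ y

theorem one_lt_rank_V2 : 1 < Module.rank ℝ V2 := by
  rw [← Module.finrank_eq_rank, finrank_euclideanSpace_fin]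
  norm_num

/-- Let `Λ` be a lattice in ℝ².  Suppose `F : ℝ² → ℝ²` is continuous, `G : ℝ² → ℝ²` is a
homeomorphism, and `π_Λ ∘ F = π_Λ ∘ G` (i.e. `F(x)` lies in the `Γ_Λ`-orbit of `G(x)` for
every `x`).  Then there is a single element `γ ∈ Γ_Λ` with `F = γ ∘ G`: a map inducing a
given map on `ℝ²/Γ_Λ` is unique up to postcomposition with an element of `Γ_Λ`. -/
theorem lift_unique_up_to_gamma
    (Λ : AddSubgroup V2) (hΛ : IsLattice Λ)
    (F : V2 → V2) (hF : Continuous F) (G : V2 ≃ₜ V2)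
    (hFG : ∀ x : V2, F x ∈ orbitG Λ (G x)) :
    ∃ γ ∈ GammaSet Λ, F = γ ∘ ⇑G := by
  have := hΛ.1
  have hH : ∀ y, ∃ l ∈ Λ, (F ∘ G.symm) y = (2:ℝ) • l + y ∨ (F ∘ G.symm) y = (2:ℝ) • l - y :=
    fun y => by simpa [orbitG] using hFG (G.symm y)
  obtain ⟨l, hl, hγ⟩ :=
    exists_forall_eq_two_smul_add_or_sub one_lt_rank_V2 Λ (hF.comp G.symm.continuous) hH
  refine ⟨F ∘ G.symm, ⟨l, hl, hγ⟩, ?_⟩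
  ext x
  simp
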